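/- Let U : ℝ^d × P₂(ℝ^d) → ℝ with U, ∂ₓU continuous, and suppose U is Lasry-Lions monotone: E[U(ξ¹, μ¹) + U(ξ², μ²) − U(ξ¹, μ²) − U(ξ², μ¹)] ≥ 0 for all square-integrable ξ¹, ξ² with laws μ¹, μ². If in addition ∂ₓₓU exists and is uniformly bounded by a constant C (in operator norm), then U is displacement λ-monotone for λ = 2C, i.e. E[⟨∂ₓU(ξ¹, μ¹) − ∂ₓU(ξ², μ²), ξ¹ − ξ²⟩ + 2C|ξ¹ − ξ²|²] ≥ 0. -/

import Mathlib

open MeasureTheory ProbabilityTheory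
open scoped RealInnerProductSpace ENNReal

/-!
Write `f₁ = U(·, μ₁)` and `f₂ = U(·, μ₂)`. Pointwise, the Lasry-Lions increment
`f₁ x + f₂ y - f₂ x - f₁ y` differs from `⟪∇f₁ x - ∇f₂ y, x - y⟫` by minus the sum of the
first-order Taylor remainders of `f₁` at `x` and of `f₂` at `y`. Since `∇fᵢ` is `C`-Lipschitz by
the Hessian bound, each remainder is at most `C ‖x - y‖²` by the mean value inequality. Taking
expectations at `x = ξ₁`, `y = ξ₂` and using Lasry-Lions monotonicity gives the claim.
-/

section MeanValue

variable {E F : Type*} [NormedAddCommGroup E] [NormedSpace ℝ E] [NormedAddCommGroup F]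
  [NormedSpace ℝ F] {C : ℝ}

theorem norm_sub_le_of_forall_norm_hasFDerivAt_le {f : E → F} {f' : E → E →L[ℝ] F}
    (hf : ∀ x, HasFDerivAt f (f' x) x) (bound : ∀ x, ‖f' x‖ ≤ C) (x y : E) :
    ‖f x - f y‖ ≤ C * ‖x - y‖ :=
  convex_univ.norm_image_sub_le_of_norm_hasFDerivWithin_le
    (fun z _ => (hf z).hasFDerivWithinAt) (fun z _ => bound z) (Set.mem_univ y) (Set.mem_univ x)

end MeanValue

section Taylor

variable {E : Type*} [NormedAddCommGroup E] [InnerProductSpace ℝ E] [CompleteSpace E] {C : ℝ}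

theorem abs_sub_sub_inner_le_of_norm_hessian_le {f : E → ℝ} {f' : E → E}
    {f'' : E → E →L[ℝ] E} (hf : ∀ x, HasGradientAt f (f' x) x)
    (hf' : ∀ x, HasFDerivAt f' (f'' x) x) (hf'' : ∀ x, ‖f'' x‖ ≤ C) (x y : E) :
    |f y - f x - ⟪f' x, y - x⟫| ≤ C * ‖y - x‖ ^ 2 := by
  have hC : 0 ≤ C := (norm_nonneg _).trans (hf'' x)
  have bound : ∀ z ∈ segment ℝ x y,
      ‖InnerProductSpace.toDual ℝ E (f' z) - InnerProductSpace.toDual ℝ E (f' x)‖ ≤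
        C * ‖y - x‖ := by
    intro z hz
    rw [← map_sub, LinearIsometryEquiv.norm_map]
    calc ‖f' z - f' x‖ ≤ C * ‖z - x‖ := norm_sub_le_of_forall_norm_hasFDerivAt_le hf' hf'' z x
      _ ≤ C * ‖y - x‖ := by gcongr; exact norm_sub_le_of_mem_segment hz
  have := (convex_segment x y).norm_image_sub_le_of_norm_hasFDerivWithin_le'
    (fun z _ => (hf z).hasFDerivAt.hasFDerivWithinAt) bound
    (left_mem_segment ℝ x y) (right_mem_segment ℝ x y)
  rw [InnerProductSpace.toDual_apply_apply, Real.norm_eq_abs] at this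
  rwa [sq, ← mul_assoc]

theorem abs_sub_sub_sub_inner_le_of_norm_hessian_le {f₁ f₂ : E → ℝ} {f₁' f₂' : E → E}
    {f₁'' f₂'' : E → E →L[ℝ] E} (hf₁ : ∀ x, HasGradientAt f₁ (f₁' x) x)
    (hf₂ : ∀ x, HasGradientAt f₂ (f₂' x) x) (hf₁' : ∀ x, HasFDerivAt f₁' (f₁'' x) x)
    (hf₂' : ∀ x, HasFDerivAt f₂' (f₂'' x) x) (hf₁'' : ∀ x, ‖f₁'' x‖ ≤ C)
    (hf₂'' : ∀ x, ‖f₂'' x‖ ≤ C) (x y : E) :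
    |f₁ x + f₂ y - f₂ x - f₁ y - ⟪f₁' x - f₂' y, x - y⟫| ≤ 2 * C * ‖x - y‖ ^ 2 := by
  have h₁ := abs_sub_sub_inner_le_of_norm_hessian_le hf₁ hf₁' hf₁'' x y
  have h₂ := abs_sub_sub_inner_le_of_norm_hessian_le hf₂ hf₂' hf₂'' y x
  rw [norm_sub_rev] at h₁
  have hsplit : f₁ x + f₂ y - f₂ x - f₁ y - ⟪f₁' x - f₂' y, x - y⟫ =
      -((f₁ y - f₁ x - ⟪f₁' x, y - x⟫) + (f₂ x - f₂ y - ⟪f₂' y, x - y⟫)) := by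
    rw [inner_sub_left, ← neg_sub x y, inner_neg_right]
    ring
  rw [hsplit, abs_neg]
  linarith [abs_add_le (f₁ y - f₁ x - ⟪f₁' x, y - x⟫) (f₂ x - f₂ y - ⟪f₂' y, x - y⟫)]

end Taylor

namespace MeasureTheory

variable {Ω : Type*} [MeasurableSpace Ω] {μ : Measure Ω}

theorem MemLp.integrable_inner {E : Type*} [NormedAddCommGroup E] [InnerProductSpace ℝ E]
    {f g : Ω → E} (hf : MemLp f 2 μ) (hg : MemLp g 2 μ) :
    Integrable (fun ω => ⟪f ω, g ω⟫) μ :=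
  (L2.integrable_inner (hf.toLp f) (hg.toLp g)).congr <| by
    filter_upwards [hf.coeFn_toLp, hg.coeFn_toLp] with ω hfω hgω
    rw [hfω, hgω]

theorem MemLp.comp_of_norm_sub_le [IsFiniteMeasure μ] {E F : Type*} [NormedAddCommGroup E]
    [NormedAddCommGroup F] {p : ℝ≥0∞} {C : ℝ} {g : E → F} (hg : Continuous g)
    (hlip : ∀ x y, ‖g x - g y‖ ≤ C * ‖x - y‖) {ξ : Ω → E} (hξ : MemLp ξ p μ) :
    MemLp (fun ω => g (ξ ω)) p μ := by
  refine ((memLp_const ‖g 0‖).add (hξ.norm.const_mul C)).of_le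
    (hg.comp_aestronglyMeasurable hξ.1) (Filter.Eventually.of_forall fun ω => ?_)
  calc ‖g (ξ ω)‖ ≤ ‖g 0‖ + ‖g (ξ ω) - g 0‖ := norm_le_norm_add_norm_sub' _ _
    _ ≤ ‖g 0‖ + C * ‖ξ ω‖ := by simpa using hlip (ξ ω) 0
    _ ≤ ‖‖g 0‖ + C * ‖ξ ω‖‖ := Real.le_norm_self _

theorem integral_le_integral_add_of_abs_sub_le {f g h : Ω → ℝ} (hf : AEStronglyMeasurable f μ)
    (hg : Integrable g μ) (hh : Integrable h μ) (hfg : ∀ ω, |f ω - g ω| ≤ h ω) :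
    ∫ ω, f ω ∂μ ≤ ∫ ω, (g ω + h ω) ∂μ := by
  have hf_int : Integrable f μ := by
    refine (hg.abs.add hh).mono' hf (Filter.Eventually.of_forall fun ω => ?_)
    rw [Real.norm_eq_abs, Pi.add_apply]
    linarith [hfg ω, abs_sub_abs_le_abs_sub (f ω) (g ω)]
  exact integral_mono hf_int (hg.add hh) fun ω => by linarith [(abs_le.mp (hfg ω)).2]

end MeasureTheory

theorem stmt_1_general
    {d : ℕ} {Ω : Type*} [MeasureSpace Ω] [IsProbabilityMeasure (ℙ : Measure Ω)]
    (C : ℝ)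
    (U : EuclideanSpace ℝ (Fin d) → ProbabilityMeasure (EuclideanSpace ℝ (Fin d)) → ℝ)
    (DxU : EuclideanSpace ℝ (Fin d) → ProbabilityMeasure (EuclideanSpace ℝ (Fin d)) →
      EuclideanSpace ℝ (Fin d))
    (DxxU : EuclideanSpace ℝ (Fin d) → ProbabilityMeasure (EuclideanSpace ℝ (Fin d)) →
      (EuclideanSpace ℝ (Fin d) →L[ℝ] EuclideanSpace ℝ (Fin d)))
    (hDxU : ∀ (μ : ProbabilityMeasure (EuclideanSpace ℝ (Fin d))) (x : EuclideanSpace ℝ (Fin d)),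
      HasGradientAt (fun y => U y μ) (DxU x μ) x)
    (hDxxU : ∀ (μ : ProbabilityMeasure (EuclideanSpace ℝ (Fin d))) (x : EuclideanSpace ℝ (Fin d)),
      HasFDerivAt (fun y => DxU y μ) (DxxU x μ) x)
    (hDxxUbd : ∀ (x : EuclideanSpace ℝ (Fin d))
      (μ : ProbabilityMeasure (EuclideanSpace ℝ (Fin d))), ‖DxxU x μ‖ ≤ C)
    -- Lasry-Lions monotonicity of `U`
    (hLL : ∀ (ξ₁ ξ₂ : Ω → EuclideanSpace ℝ (Fin d))
      (μ₁ μ₂ : ProbabilityMeasure (EuclideanSpace ℝ (Fin d))),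
      Measurable ξ₁ → Measurable ξ₂ → MemLp ξ₁ 2 ℙ → MemLp ξ₂ 2 ℙ →
      (μ₁ : Measure (EuclideanSpace ℝ (Fin d))) = Measure.map ξ₁ ℙ →
      (μ₂ : Measure (EuclideanSpace ℝ (Fin d))) = Measure.map ξ₂ ℙ →
      0 ≤ ∫ ω, (U (ξ₁ ω) μ₁ + U (ξ₂ ω) μ₂ - U (ξ₁ ω) μ₂ - U (ξ₂ ω) μ₁) ∂ℙ) :
    -- displacement `2C`-monotonicity of `U`
    ∀ (ξ₁ ξ₂ : Ω → EuclideanSpace ℝ (Fin d))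
      (μ₁ μ₂ : ProbabilityMeasure (EuclideanSpace ℝ (Fin d))),
      Measurable ξ₁ → Measurable ξ₂ → MemLp ξ₁ 2 ℙ → MemLp ξ₂ 2 ℙ →
      (μ₁ : Measure (EuclideanSpace ℝ (Fin d))) = Measure.map ξ₁ ℙ →
      (μ₂ : Measure (EuclideanSpace ℝ (Fin d))) = Measure.map ξ₂ ℙ →
      0 ≤ ∫ ω, (⟪DxU (ξ₁ ω) μ₁ - DxU (ξ₂ ω) μ₂, ξ₁ ω - ξ₂ ω⟫
          + 2 * C * ‖ξ₁ ω - ξ₂ ω‖ ^ 2) ∂ℙ := by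
  intro ξ₁ ξ₂ μ₁ μ₂ hm₁ hm₂ hξ₁ hξ₂ hμ₁ hμ₂
  have hU_cont ν : Continuous (U · ν) :=
    continuous_iff_continuousAt.2 fun x => (hDxU ν x).continuousAt
  have hDxU_memLp ν {ξ : Ω → EuclideanSpace ℝ (Fin d)} (hξ : MemLp ξ 2 ℙ) :
      MemLp (fun ω => DxU (ξ ω) ν) 2 ℙ :=
    hξ.comp_of_norm_sub_le (continuous_iff_continuousAt.2 fun x => (hDxxU ν x).continuousAt)
      (norm_sub_le_of_forall_norm_hasFDerivAt_le (hDxxU ν) (hDxxUbd · ν))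
  have hLL_meas : AEStronglyMeasurable
      (fun ω => U (ξ₁ ω) μ₁ + U (ξ₂ ω) μ₂ - U (ξ₁ ω) μ₂ - U (ξ₂ ω) μ₁) ℙ :=
    ((((hU_cont μ₁).comp_aestronglyMeasurable hξ₁.1).add
      ((hU_cont μ₂).comp_aestronglyMeasurable hξ₂.1)).sub
      ((hU_cont μ₂).comp_aestronglyMeasurable hξ₁.1)).sub
      ((hU_cont μ₁).comp_aestronglyMeasurable hξ₂.1)
  have hinner_int := ((hDxU_memLp μ₁ hξ₁).sub (hDxU_memLp μ₂ hξ₂)).integrable_inner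
    (hξ₁.sub hξ₂)
  have hsq_int := ((hξ₁.sub hξ₂).integrable_norm_pow two_ne_zero).const_mul (2 * C)
  exact (hLL ξ₁ ξ₂ μ₁ μ₂ hm₁ hm₂ hξ₁ hξ₂ hμ₁ hμ₂).trans <|
    integral_le_integral_add_of_abs_sub_le hLL_meas hinner_int hsq_int fun ω =>
      abs_sub_sub_sub_inner_le_of_norm_hessian_le (hDxU μ₁) (hDxU μ₂) (hDxxU μ₁) (hDxxU μ₂)
        (hDxxUbd · μ₁) (hDxxUbd · μ₂) (ξ₁ ω) (ξ₂ ω)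

/-- If `U` is Lasry-Lions monotone and `∂ₓₓU` is uniformly bounded by `C`, then `U` is
displacement `λ`-monotone with `λ = 2C`. -/
theorem stmt_1
    {d : ℕ} {Ω : Type*} [MeasureSpace Ω] [IsProbabilityMeasure (ℙ : Measure Ω)]
    (C : ℝ) (hC : 0 ≤ C)
    (U : EuclideanSpace ℝ (Fin d) → ProbabilityMeasure (EuclideanSpace ℝ (Fin d)) → ℝ)
    (DxU : EuclideanSpace ℝ (Fin d) → ProbabilityMeasure (EuclideanSpace ℝ (Fin d)) →
      EuclideanSpace ℝ (Fin d))
    (DxxU : EuclideanSpace ℝ (Fin d) → ProbabilityMeasure (EuclideanSpace ℝ (Fin d)) →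
      (EuclideanSpace ℝ (Fin d) →L[ℝ] EuclideanSpace ℝ (Fin d)))
    (hUcont : Continuous fun q :
      EuclideanSpace ℝ (Fin d) × ProbabilityMeasure (EuclideanSpace ℝ (Fin d)) => U q.1 q.2)
    (hDxUcont : Continuous fun q :
      EuclideanSpace ℝ (Fin d) × ProbabilityMeasure (EuclideanSpace ℝ (Fin d)) => DxU q.1 q.2)
    (hDxU : ∀ (μ : ProbabilityMeasure (EuclideanSpace ℝ (Fin d))) (x : EuclideanSpace ℝ (Fin d)),
      HasGradientAt (fun y => U y μ) (DxU x μ) x)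
    (hDxxU : ∀ (μ : ProbabilityMeasure (EuclideanSpace ℝ (Fin d))) (x : EuclideanSpace ℝ (Fin d)),
      HasFDerivAt (fun y => DxU y μ) (DxxU x μ) x)
    (hDxxUbd : ∀ (x : EuclideanSpace ℝ (Fin d))
      (μ : ProbabilityMeasure (EuclideanSpace ℝ (Fin d))), ‖DxxU x μ‖ ≤ C)
    -- Lasry-Lions monotonicity of `U`
    (hLL : ∀ (ξ₁ ξ₂ : Ω → EuclideanSpace ℝ (Fin d))
      (μ₁ μ₂ : ProbabilityMeasure (EuclideanSpace ℝ (Fin d))),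
      Measurable ξ₁ → Measurable ξ₂ → MemLp ξ₁ 2 ℙ → MemLp ξ₂ 2 ℙ →
      (μ₁ : Measure (EuclideanSpace ℝ (Fin d))) = Measure.map ξ₁ ℙ →
      (μ₂ : Measure (EuclideanSpace ℝ (Fin d))) = Measure.map ξ₂ ℙ →
      0 ≤ ∫ ω, (U (ξ₁ ω) μ₁ + U (ξ₂ ω) μ₂ - U (ξ₁ ω) μ₂ - U (ξ₂ ω) μ₁) ∂ℙ) :
    -- displacement `2C`-monotonicity of `U`
    ∀ (ξ₁ ξ₂ : Ω → EuclideanSpace ℝ (Fin d))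
      (μ₁ μ₂ : ProbabilityMeasure (EuclideanSpace ℝ (Fin d))),
      Measurable ξ₁ → Measurable ξ₂ → MemLp ξ₁ 2 ℙ → MemLp ξ₂ 2 ℙ →
      (μ₁ : Measure (EuclideanSpace ℝ (Fin d))) = Measure.map ξ₁ ℙ →
      (μ₂ : Measure (EuclideanSpace ℝ (Fin d))) = Measure.map ξ₂ ℙ →
      0 ≤ ∫ ω, (⟪DxU (ξ₁ ω) μ₁ - DxU (ξ₂ ω) μ₂, ξ₁ ω - ξ₂ ω⟫
          + 2 * C * ‖ξ₁ ω - ξ₂ ω‖ ^ 2) ∂ℙ :=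
  stmt_1_general C U DxU DxxU hDxU hDxxU hDxxUbd hLL
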